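/- Let γ > 0, ω > 4/γ², λ > 0, μ > 0. Then d(ω) := inf{ S_ω(ψ) : ψ ∈ Q \ {0}, I_ω(ψ) = 0 } is strictly positive, where S_ω(ψ) = ½‖ψ'‖² + (ω/2)‖ψ‖² − γ⁻¹·½|ψ(0⁺)−ψ(0⁻)|² − λ(2μ+2)⁻¹‖ψ‖_{2μ+2}^{2μ+2} and I_ω(ψ) = ‖ψ'‖² + ω‖ψ‖² − γ⁻¹|ψ(0⁺)−ψ(0⁻)|² − λ‖ψ‖_{2μ+2}^{2μ+2}. -/

import Mathlib

open MeasureTheory Filter Set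

/-- The jump of a function at the origin: `ψ(0⁺) − ψ(0⁻)`. -/
noncomputable def jumpC (ψ : ℝ → ℂ) : ℂ :=
  limUnder (nhdsWithin 0 (Ioi 0)) ψ - limUnder (nhdsWithin 0 (Iio 0)) ψ

/-- Membership in the energy space `Q = H¹(ℝ⁺) ⊕ H¹(ℝ⁻)`, with `ψ'` the
derivative of `ψ` on each half-line. -/
structure MemQ (ψ ψ' : ℝ → ℂ) : Prop where
  deriv_pos : ∀ x ∈ Ioi (0:ℝ), HasDerivWithinAt ψ (ψ' x) (Ioi 0) x
  deriv_neg : ∀ x ∈ Iio (0:ℝ), HasDerivWithinAt ψ (ψ' x) (Iio 0) x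
  l2 : Integrable (fun x => ‖ψ x‖^2)
  l2' : Integrable (fun x => ‖ψ' x‖^2)
  lim_pos : ∃ a : ℂ, Tendsto ψ (nhdsWithin 0 (Ioi 0)) (nhds a)
  lim_neg : ∃ a : ℂ, Tendsto ψ (nhdsWithin 0 (Iio 0)) (nhds a)

/-- The squared `Q`-norm `‖ψ‖² + ‖ψ'‖²`. -/
noncomputable def nQsq (ψ ψ' : ℝ → ℂ) : ℝ :=
  (∫ x, ‖ψ x‖^2) + ∫ x, ‖ψ' x‖^2

/-- The quadratic form of the attractive δ' interaction. -/
noncomputable def Fform (γ : ℝ) (ψ ψ' : ℝ → ℂ) : ℝ :=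
  (∫ x, ‖ψ' x‖^2) - γ⁻¹ * ‖jumpC ψ‖^2


/-- The Nehari functional `I_ω`. -/
noncomputable def Ifun (γ ω lam μ : ℝ) (ψ ψ' : ℝ → ℂ) : ℝ :=
  (∫ x, ‖ψ' x‖^2) + ω * (∫ x, ‖ψ x‖^2) - γ⁻¹ * ‖jumpC ψ‖^2
    - lam * ∫ x, ‖ψ x‖ ^ (2*μ+2)

/-- The action functional `S_ω`. -/
noncomputable def Sfun (γ ω lam μ : ℝ) (ψ ψ' : ℝ → ℂ) : ℝ :=
  (1/2) * (∫ x, ‖ψ' x‖^2) + (ω/2) * (∫ x, ‖ψ x‖^2)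
    - (1/(2*γ)) * ‖jumpC ψ‖^2 - lam/(2*μ+2) * ∫ x, ‖ψ x‖ ^ (2*μ+2)


open scoped Topology

lemma ptCS {a b c d t : ℝ} (ht : 0 < t) :
    |2*(a*c+b*d)| ≤ t*(a^2+b^2) + t⁻¹*(c^2+d^2) := by
  have ht' : 0 < t⁻¹ := inv_pos.mpr ht
  rw [abs_le]
  constructor <;> nlinarith [mul_nonneg ht'.le (sq_nonneg (t*a - c)),
    mul_nonneg ht'.le (sq_nonneg (t*b - d)),
    mul_nonneg ht'.le (sq_nonneg (t*a + c)),
    mul_nonneg ht'.le (sq_nonneg (t*b + d)), inv_mul_cancel₀ ht.ne']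

lemma normSq_hasDerivAt {u u' : ℝ → ℂ} {x : ℝ} (h : HasDerivAt u (u' x) x) :
    HasDerivAt (fun y => ‖u y‖^2)
      (2*((u x).re*(u' x).re + (u x).im*(u' x).im)) x := by
  have hre : HasDerivAt (fun z => (u z).re) ((u' x).re) x :=
    (Complex.reCLM.hasFDerivAt.comp_hasDerivAt x h)
  have him : HasDerivAt (fun z => (u z).im) ((u' x).im) x :=
    (Complex.imCLM.hasFDerivAt.comp_hasDerivAt x h)
  have := (hre.mul hre).add (him.mul him)
  have heq : (fun y => ‖u y‖^2) = fun y => (u y).re * (u y).re + (u y).im * (u y).im := by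
    funext y
    rw [Complex.sq_norm, Complex.normSq_apply]
  rw [heq]
  exact this.congr_deriv (by ring)

lemma halfline_bound (u u' : ℝ → ℂ)
    (hd : ∀ x ∈ Ioi (0:ℝ), HasDerivWithinAt u (u' x) (Ioi 0) x)
    (hu : IntegrableOn (fun x => ‖u x‖^2) (Ioi 0) volume)
    (hu' : IntegrableOn (fun x => ‖u' x‖^2) (Ioi 0) volume)
    {t : ℝ} (ht : 0 < t) {x : ℝ} (hx : x ∈ Ioi (0:ℝ)) :
    ‖u x‖^2 ≤ t * (∫ y in Ioi (0:ℝ), ‖u y‖^2) + t⁻¹ * ∫ y in Ioi (0:ℝ), ‖u' y‖^2 := by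
  have ht' : 0 < t⁻¹ := inv_pos.mpr ht
  set g : ℝ → ℝ := fun y => ‖u y‖^2 with hgdef
  set G : ℝ → ℝ := deriv g with hGdef
  have hdAt : ∀ y ∈ Ioi (0:ℝ), HasDerivAt u (u' y) y := fun y hy =>
    (hd y hy).hasDerivAt (Ioi_mem_nhds hy)
  have hgd : ∀ y ∈ Ioi (0:ℝ), HasDerivAt g (G y) y := by
    intro y hy
    have h2 := normSq_hasDerivAt (hdAt y hy)
    have : G y = 2*((u y).re*(u' y).re + (u y).im*(u' y).im) := h2.deriv
    rw [this]; exact h2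
  have hGb : ∀ y ∈ Ioi (0:ℝ), |G y| ≤ t * g y + t⁻¹ * ‖u' y‖^2 := by
    intro y hy
    have h2 := normSq_hasDerivAt (hdAt y hy)
    rw [(hgd y hy).unique h2]
    have hb := ptCS (a := (u y).re) (b := (u y).im) (c := (u' y).re) (d := (u' y).im) ht
    have h3 : ‖u y‖^2 = (u y).re^2 + (u y).im^2 := by
      rw [Complex.sq_norm, Complex.normSq_apply]; ring
    have h4 : ‖u' y‖^2 = (u' y).re^2 + (u' y).im^2 := by
      rw [Complex.sq_norm, Complex.normSq_apply]; ring
    simp only [hgdef]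
    rw [h3, h4]
    exact hb
  -- integrability of G on Ioi 0
  have hGmeas : AEStronglyMeasurable G (volume.restrict (Ioi (0:ℝ))) :=
    ((measurable_deriv g).aestronglyMeasurable).restrict
  have hbound_int : IntegrableOn (fun y => t * g y + t⁻¹ * ‖u' y‖^2) (Ioi (0:ℝ)) volume :=
    (hu.const_mul t).add (hu'.const_mul t⁻¹)
  have hGint : IntegrableOn G (Ioi (0:ℝ)) volume := by
    refine Integrable.mono' hbound_int hGmeas ?_
    rw [ae_restrict_iff' measurableSet_Ioi]
    exact Eventually.of_forall fun y hy => by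
      simpa [Real.norm_eq_abs] using hGb y hy
  set c : ℝ := t * (∫ y in Ioi (0:ℝ), ‖u y‖^2) + t⁻¹ * ∫ y in Ioi (0:ℝ), ‖u' y‖^2 with hc
  have hIG : ∫ y in Ioi (0:ℝ), |G y| ≤ c := by
    have h5 : ∫ y in Ioi (0:ℝ), |G y| ≤ ∫ y in Ioi (0:ℝ), (t * g y + t⁻¹ * ‖u' y‖^2) := by
      refine integral_mono_of_nonneg (Eventually.of_forall fun y => abs_nonneg _) hbound_int ?_
      rw [EventuallyLE, ae_restrict_iff' measurableSet_Ioi]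
      exact Eventually.of_forall fun y hy => hGb y hy
    calc ∫ y in Ioi (0:ℝ), |G y| ≤ _ := h5
      _ = c := by rw [integral_add (hu.const_mul t) (hu'.const_mul t⁻¹),
            integral_const_mul, integral_const_mul]
  by_contra hcon
  push_neg at hcon
  set η : ℝ := g x - c with hη
  have hηpos : 0 < η := by show (0:ℝ) < ‖u x‖^2 - c; linarith [hcon]
  have hc0 : (0:ℝ) ≤ c := add_nonneg
    (mul_nonneg ht.le (setIntegral_nonneg measurableSet_Ioi fun y _ => sq_nonneg _))
    (mul_nonneg ht'.le (setIntegral_nonneg measurableSet_Ioi fun y _ => sq_nonneg _))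
  have hlow : ∀ y ∈ Ici x, η ≤ g y := by
    intro y hy
    rcases eq_or_lt_of_le (mem_Ici.mp hy) with rfl | hxy
    · show g x - c ≤ g x
      linarith
    · have hxy' : x ≤ y := hxy.le
      have hderiv : ∀ z ∈ uIcc x y, HasDerivAt g (G z) z := by
        intro z hz
        rw [uIcc_of_le hxy'] at hz
        exact hgd z (lt_of_lt_of_le hx hz.1)
      have hGiv : IntervalIntegrable G volume x y := by
        rw [intervalIntegrable_iff, uIoc_of_le hxy']
        exact hGint.mono_set fun z hz => lt_trans hx hz.1
      have hftc := intervalIntegral.integral_eq_sub_of_hasDerivAt hderiv hGiv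
      have habs : |∫ z in x..y, G z| ≤ ∫ z in Ioi (0:ℝ), |G z| := by
        calc |∫ z in x..y, G z| ≤ ∫ z in x..y, |G z| :=
              intervalIntegral.abs_integral_le_integral_abs hxy'
          _ = ∫ z in Ioc x y, |G z| := by rw [intervalIntegral.integral_of_le hxy']
          _ ≤ ∫ z in Ioi (0:ℝ), |G z| := by
              refine setIntegral_mono_set hGint.abs ?_ ?_
              · exact Eventually.of_forall fun z => abs_nonneg _
              · exact Eventually.of_forall fun z hz => lt_trans hx hz.1
      have : g y = g x + ∫ z in x..y, G z := by linarith [hftc]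
      have : g y ≥ g x - |∫ z in x..y, G z| := by
        rcases abs_le.mp (le_refl |∫ z in x..y, G z|) with ⟨h6, h7⟩
        linarith [neg_abs_le (∫ z in x..y, G z)]
      simp only [hη]
      linarith [habs, hIG]
  -- contradiction with integrability of g
  have hg_int : IntegrableOn g (Ioi x) volume := hu.mono_set (Ioi_subset_Ioi (le_of_lt hx))
  have hfin := hg_int.hasFiniteIntegral
  have htop : (∫⁻ y in Ioi x, ‖g y‖₊ ∂volume) = ⊤ := by
    have hle : ∫⁻ y in Ioi x, (ENNReal.ofReal η) ∂volume ≤ ∫⁻ y in Ioi x, ‖g y‖₊ ∂volume := by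
      refine lintegral_mono_ae ?_
      rw [ae_restrict_iff' measurableSet_Ioi]
      refine Eventually.of_forall fun y hy => ?_
      have h8 : η ≤ g y := hlow y (mem_Ici.mpr (le_of_lt (mem_Ioi.mp hy)))
      have h9 : (0:ℝ) ≤ g y := le_trans hηpos.le h8
      calc ENNReal.ofReal η ≤ ENNReal.ofReal (g y) := ENNReal.ofReal_le_ofReal h8
        _ = ‖g y‖₊ := by rw [← Real.enorm_eq_ofReal h9]; rfl
    rw [setLIntegral_const] at hle
    rw [Real.volume_Ioi, ENNReal.mul_top (ENNReal.ofReal_pos.mpr hηpos).ne'] at hle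
    exact top_le_iff.mp hle
  rw [HasFiniteIntegral] at hfin
  exact absurd htop (by exact ne_of_lt hfin)

lemma integrableOn_comp_neg {f : ℝ → ℝ} {s : Set ℝ} (h : IntegrableOn f s volume) :
    IntegrableOn (fun x => f (-x)) ((fun x : ℝ => -x) ⁻¹' s) volume := by
  have m : MeasurableEmbedding (fun x : ℝ => -x) :=
    (Homeomorph.neg ℝ).measurableEmbedding
  rw [← Measure.map_neg_eq_self (volume : Measure ℝ)] at h
  exact m.integrableOn_map_iff.mp h

lemma neg_preimage_Iio : (fun x : ℝ => -x) ⁻¹' (Iio 0) = Ioi 0 := by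
  ext x; simp

lemma neg_preimage_Iic : (fun x : ℝ => -x) ⁻¹' (Iic 0) = Ici 0 := by
  ext x; simp

lemma exp_abs_integrable {b : ℝ} (hb : 0 < b) :
    Integrable (fun x : ℝ => Real.exp (-(b*|x|))) := by
  have h1 : IntegrableOn (fun x : ℝ => Real.exp (-(b*x))) (Ioi 0) volume := by
    simpa [neg_mul] using exp_neg_integrableOn_Ioi 0 hb
  have h2 : IntegrableOn (fun x : ℝ => Real.exp (-(b*|x|))) (Ioi 0) volume := by
    refine h1.congr_fun (fun x hx => ?_) measurableSet_Ioi
    rw [abs_of_pos hx]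
  have h3 : IntegrableOn (fun x : ℝ => Real.exp (-(b*|x|))) (Iic 0) volume := by
    have h4 : IntegrableOn (fun x : ℝ => Real.exp (-(b*|x|))) (Ici 0) volume :=
      Iff.mpr integrableOn_Ici_iff_integrableOn_Ioi h2
    have h5 := integrableOn_comp_neg h4
    rw [show (fun x : ℝ => -x) ⁻¹' (Ici 0) = Iic 0 by ext x; simp] at h5
    refine h5.congr_fun (fun x _ => ?_) measurableSet_Iic
    simp only [abs_neg]
  rw [← integrableOn_univ, ← Iic_union_Ioi (a := (0:ℝ))]
  exact h3.union h2

lemma exp_abs_integral_pos {b : ℝ} (hb : 0 < b) :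
    0 < ∫ x : ℝ, Real.exp (-(b*|x|)) := by
  refine (integral_pos_iff_support_of_nonneg (fun x => (Real.exp_pos _).le)
    (exp_abs_integrable hb)).mpr ?_
  have hsupp : Function.support (fun x : ℝ => Real.exp (-(b*|x|))) = univ := by
    ext x; simp [Real.exp_ne_zero]
  rw [hsupp]
  simp

lemma exists_elem (γ ω lam μ : ℝ) (hγ : 0 < γ) (hω : 0 < ω) (hlam : 0 < lam) (hμ : 0 < μ) :
    ∃ ψ ψ' : ℝ → ℂ, MemQ ψ ψ' ∧ ¬ ψ =ᵐ[volume] 0 ∧ Ifun γ ω lam μ ψ ψ' = 0 := by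
  have h2μ : (0:ℝ) < 2*μ+2 := by linarith
  set K2 : ℝ := ∫ x : ℝ, Real.exp (-(2*|x|)) with hK2
  set K : ℝ := ∫ x : ℝ, Real.exp (-((2*μ+2)*|x|)) with hK
  have hK2pos : 0 < K2 := exp_abs_integral_pos two_pos
  have hKpos : 0 < K := exp_abs_integral_pos h2μ
  set X : ℝ := K2*(1+ω)/(lam*K) with hX
  have hXpos : 0 < X := div_pos (mul_pos hK2pos (by linarith)) (mul_pos hlam hKpos)
  set c₀ : ℝ := X ^ (1/(2*μ)) with hc₀
  have hc₀pos : 0 < c₀ := Real.rpow_pos_of_pos hXpos _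
  set f : ℝ → ℝ := fun x => c₀ * Real.exp (-|x|) with hf
  set ψ : ℝ → ℂ := fun x => ((f x : ℝ) : ℂ) with hψ
  set ψ' : ℝ → ℂ := fun x => if x < 0 then ((c₀ * Real.exp x : ℝ) : ℂ)
      else ((-(c₀ * Real.exp (-x)) : ℝ) : ℂ) with hψ'
  have hfpos : ∀ x, 0 < f x := fun x => mul_pos hc₀pos (Real.exp_pos _)
  have hnψ : ∀ x, ‖ψ x‖ = f x := fun x => by
    rw [hψ, Complex.norm_real, Real.norm_eq_abs, abs_of_pos (hfpos x)]
  have hexp2 : ∀ r : ℝ, Real.exp r ^ (2:ℕ) = Real.exp (2*r) := fun r => by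
    rw [← Real.exp_nat_mul]; norm_num
  have hn2 : ∀ x, ‖ψ x‖^2 = c₀^2 * Real.exp (-(2*|x|)) := fun x => by
    rw [hnψ, hf]
    simp only [mul_pow, hexp2]
    ring_nf
  have hn'2 : ∀ x, ‖ψ' x‖^2 = c₀^2 * Real.exp (-(2*|x|)) := fun x => by
    by_cases hx : x < 0
    · rw [hψ']
      simp only [if_pos hx]
      rw [Complex.norm_real, Real.norm_eq_abs,
        abs_of_pos (mul_pos hc₀pos (Real.exp_pos _)), abs_of_neg hx]
      simp only [mul_pow, hexp2]
      ring_nf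
    · rw [hψ']
      simp only [if_neg hx]
      push_neg at hx
      rw [Complex.norm_real, Real.norm_eq_abs, abs_neg,
        abs_of_pos (mul_pos hc₀pos (Real.exp_pos _)), abs_of_nonneg hx]
      simp only [mul_pow, hexp2]
      ring_nf
  have hcont : Continuous ψ := by
    rw [hψ, hf]
    exact Complex.continuous_ofReal.comp
      (continuous_const.mul (Real.continuous_exp.comp continuous_abs.neg))
  have hψ0 : ψ 0 = ((c₀ : ℝ) : ℂ) := by
    rw [hψ, hf]; norm_num
  have hlimp : Tendsto ψ (nhdsWithin 0 (Ioi 0)) (nhds (ψ 0)) :=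
    (hcont.tendsto 0).mono_left nhdsWithin_le_nhds
  have hlimn : Tendsto ψ (nhdsWithin 0 (Iio 0)) (nhds (ψ 0)) :=
    (hcont.tendsto 0).mono_left nhdsWithin_le_nhds
  have hjump : jumpC ψ = 0 := by
    rw [jumpC, hlimp.limUnder_eq, hlimn.limUnder_eq, sub_self]
  have hQ : MemQ ψ ψ' := by
    constructor
    · intro x hx
      have hx0 : (0:ℝ) < x := hx
      have h0 : HasDerivAt (fun y : ℝ => -y) (-1) x := (hasDerivAt_id x).neg
      have h1 : HasDerivAt (fun y : ℝ => Real.exp (-y)) (Real.exp (-x) * (-1)) x := h0.exp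
      have h2 : HasDerivAt (fun y : ℝ => c₀ * Real.exp (-y)) (c₀ * (Real.exp (-x) * (-1))) x :=
        h1.const_mul c₀
      have h3 := h2.ofReal_comp
      have h4 := h3.hasDerivWithinAt (s := Ioi 0)
      have h5 : HasDerivWithinAt ψ (((c₀ * (Real.exp (-x) * (-1)) : ℝ) : ℂ)) (Ioi 0) x := by
        refine h4.congr (fun y hy => ?_) ?_
        · rw [hψ, hf]; norm_num [abs_of_pos (show (0:ℝ) < y from hy)]
        · rw [hψ, hf]; norm_num [abs_of_pos hx0]
      have h6 : ψ' x = (((c₀ * (Real.exp (-x) * (-1)) : ℝ)) : ℂ) := by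
        simp only [hψ', if_neg (not_lt.mpr hx0.le)]
        push_cast; ring
      rw [h6]; exact h5
    · intro x hx
      have hx0 : x < 0 := hx
      have h2 : HasDerivAt (fun y : ℝ => c₀ * Real.exp y) (c₀ * Real.exp x) x :=
        (Real.hasDerivAt_exp x).const_mul c₀
      have h3 := h2.ofReal_comp
      have h4 := h3.hasDerivWithinAt (s := Iio 0)
      have h5 : HasDerivWithinAt ψ (((c₀ * Real.exp x : ℝ) : ℂ)) (Iio 0) x := by
        refine h4.congr (fun y hy => ?_) ?_
        · rw [hψ, hf]; norm_num [abs_of_neg (show y < (0:ℝ) from hy)]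
        · rw [hψ, hf]; norm_num [abs_of_neg hx0]
      have h6 : ψ' x = ((c₀ * Real.exp x : ℝ) : ℂ) := by simp only [hψ', if_pos hx0]
      rw [h6]; exact h5
    · have : (fun x => ‖ψ x‖^2) = fun x => c₀^2 * Real.exp (-(2*|x|)) := funext hn2
      rw [this]; exact (exp_abs_integrable two_pos).const_mul _
    · have : (fun x => ‖ψ' x‖^2) = fun x => c₀^2 * Real.exp (-(2*|x|)) := funext hn'2
      rw [this]; exact (exp_abs_integrable two_pos).const_mul _
    · exact ⟨ψ 0, hlimp⟩
    · exact ⟨ψ 0, hlimn⟩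
  have hne : ¬ ψ =ᵐ[volume] 0 := by
    intro h
    have h2 : ∀ᵐ x : ℝ, False := by
      filter_upwards [h] with x hx
      have : ψ x ≠ 0 := by
        rw [hψ]
        exact Complex.ofReal_ne_zero.mpr (hfpos x).ne'
      exact this hx
    obtain ⟨x, hx⟩ := h2.exists
    exact hx
  refine ⟨ψ, ψ', hQ, hne, ?_⟩
  have hInt1 : (∫ x, ‖ψ x‖^2) = c₀^2 * K2 := by
    rw [funext hn2, integral_const_mul, hK2]
  have hInt2 : (∫ x, ‖ψ' x‖^2) = c₀^2 * K2 := by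
    rw [funext hn'2, integral_const_mul, hK2]
  have hInt3 : (∫ x, ‖ψ x‖ ^ (2*μ+2)) = c₀^(2*μ+2 : ℝ) * K := by
    have heq : ∀ x, ‖ψ x‖ ^ (2*μ+2) = c₀^(2*μ+2 : ℝ) * Real.exp (-((2*μ+2)*|x|)) := by
      intro x
      rw [hnψ, hf, Real.mul_rpow hc₀pos.le (Real.exp_pos _).le]
      congr 1
      rw [← Real.exp_mul]
      ring_nf
    rw [funext heq, integral_const_mul, hK]
  have hpow : c₀^(2*μ+2 : ℝ) = c₀^(2:ℕ) * X := by
    have h1 : c₀ ^ (2*μ+2 : ℝ) = c₀ ^ (2*μ:ℝ) * c₀ ^ (2:ℝ) := by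
      rw [← Real.rpow_add hc₀pos]
    have h2 : c₀ ^ (2*μ:ℝ) = X := by
      rw [hc₀, ← Real.rpow_mul hXpos.le, one_div, inv_mul_cancel₀ (by positivity : (2*μ:ℝ) ≠ 0),
        Real.rpow_one]
    rw [h1, h2, Real.rpow_two]
    ring
  rw [Ifun, hInt1, hInt2, hInt3, hjump, norm_zero, hpow]
  have hlK : lam * K ≠ 0 := (mul_pos hlam hKpos).ne'
  rw [hX]
  field_simp
  ring

set_option maxHeartbeats 1000000 in
theorem stmt7 (γ ω lam μ : ℝ) (hγ : 0 < γ) (hω : 4/γ^2 < ω)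
    (hlam : 0 < lam) (hμ : 0 < μ) :
    0 < sInf {s : ℝ | ∃ ψ ψ' : ℝ → ℂ, MemQ ψ ψ' ∧ ¬ ψ =ᵐ[volume] 0 ∧
      Ifun γ ω lam μ ψ ψ' = 0 ∧ s = Sfun γ ω lam μ ψ ψ'} := by
  classical
  have hγ2 : (0:ℝ) < γ^2 := by positivity
  have hω0 : (0:ℝ) < ω := lt_trans (by positivity) hω
  have h4ω : 4 < ω * γ^2 := by
    have := (div_lt_iff₀ hγ2).mp hω
    linarith
  have hs1 : 4/(γ^2*ω) < 1 := by
    rw [div_lt_one (by positivity)]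
    linarith
  set s : ℝ := (4/(γ^2*ω) + 1)/2 with hs
  have hs0 : 0 < s := by positivity
  have hslt : s < 1 := by rw [hs]; linarith
  have hsgt : 4/(γ^2*ω) < s := by rw [hs]; linarith
  have hcoef : 4/(γ^2*s) < ω := by
    rw [div_lt_iff₀ (by positivity)]
    have h1 : 4/(γ^2*ω) * (γ^2*ω) = 4 := div_mul_cancel₀ _ (by positivity)
    nlinarith [mul_pos hγ2 hω0]
  set δ : ℝ := min (1 - s) (ω - 4/(γ^2*s)) with hδ
  have hδpos : 0 < δ := lt_min (by linarith) (by linarith)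
  set cst : ℝ := δ * (δ/lam)^(1/μ) * (μ/(2*μ+2)) with hcst
  clear_value s δ cst
  have hcstpos : 0 < cst := by
    rw [hcst]
    have h1 := Real.rpow_pos_of_pos (div_pos hδpos hlam) (1/μ)
    have h2 : (0:ℝ) < μ/(2*μ+2) := by positivity
    positivity
  have hbound : ∀ b ∈ {r : ℝ | ∃ ψ ψ' : ℝ → ℂ, MemQ ψ ψ' ∧ ¬ ψ =ᵐ[volume] 0 ∧
      Ifun γ ω lam μ ψ ψ' = 0 ∧ r = Sfun γ ω lam μ ψ ψ'}, cst ≤ b := by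
    rintro b ⟨ψ, ψ', hQ, hneψ, hI, rfl⟩
    rw [Ifun] at hI
    rw [Sfun]
    set P : ℝ := ∫ x, ‖ψ x‖^2 with hP
    set D : ℝ := ∫ x, ‖ψ' x‖^2 with hD
    set B : ℝ := ∫ x, ‖ψ x‖ ^ (2*μ+2) with hB
    set J : ℝ := ‖jumpC ψ‖^2 with hJdef
    set Pp : ℝ := ∫ x in Ioi (0:ℝ), ‖ψ x‖^2 with hPp
    set Dp : ℝ := ∫ x in Ioi (0:ℝ), ‖ψ' x‖^2 with hDp
    set Pm : ℝ := ∫ x in Iic (0:ℝ), ‖ψ x‖^2 with hPm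
    set Dm : ℝ := ∫ x in Iic (0:ℝ), ‖ψ' x‖^2 with hDm
    clear_value P D B J Pp Dp Pm Dm
    have hP0 : (0:ℝ) ≤ P := by
      rw [hP]; exact integral_nonneg fun x => sq_nonneg _
    have hD0 : (0:ℝ) ≤ D := by
      rw [hD]; exact integral_nonneg fun x => sq_nonneg _
    have hPp0 : (0:ℝ) ≤ Pp := by
      rw [hPp]; exact setIntegral_nonneg measurableSet_Ioi fun x _ => sq_nonneg _
    have hDp0 : (0:ℝ) ≤ Dp := by
      rw [hDp]; exact setIntegral_nonneg measurableSet_Ioi fun x _ => sq_nonneg _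
    have hPm0 : (0:ℝ) ≤ Pm := by
      rw [hPm]; exact setIntegral_nonneg measurableSet_Iic fun x _ => sq_nonneg _
    have hDm0 : (0:ℝ) ≤ Dm := by
      rw [hDm]; exact setIntegral_nonneg measurableSet_Iic fun x _ => sq_nonneg _
    have hPsplit : Pm + Pp = P := by
      rw [hPm, hPp, hP]
      exact intervalIntegral.integral_Iic_add_Ioi hQ.l2.integrableOn hQ.l2.integrableOn
    have hDsplit : Dm + Dp = D := by
      rw [hDm, hDp, hD]
      exact intervalIntegral.integral_Iic_add_Ioi hQ.l2'.integrableOn hQ.l2'.integrableOn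
    have claim_pos : ∀ t : ℝ, 0 < t → ∀ x ∈ Ioi (0:ℝ),
        ‖ψ x‖^2 ≤ t * Pp + t⁻¹ * Dp := by
      intro t ht x hx
      rw [hPp, hDp]
      exact halfline_bound ψ ψ' hQ.deriv_pos hQ.l2.integrableOn hQ.l2'.integrableOn ht hx
    -- the reflected function
    have claim_neg : ∀ t : ℝ, 0 < t → ∀ x ∈ Iio (0:ℝ),
        ‖ψ x‖^2 ≤ t * Pm + t⁻¹ * Dm := by
      intro t ht x hx
      set v : ℝ → ℂ := fun y => ψ (-y) with hv
      set v' : ℝ → ℂ := fun y => -ψ' (-y) with hv'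
      have hvd : ∀ y ∈ Ioi (0:ℝ), HasDerivWithinAt v (v' y) (Ioi 0) y := by
        intro y hy
        have hmem : -y ∈ Iio (0:ℝ) := by simpa using (mem_Ioi.mp hy)
        have h1 := hQ.deriv_neg (-y) hmem
        have hneg : HasDerivWithinAt (fun z : ℝ => -z) (-1) (Ioi 0) y :=
          ((hasDerivAt_id y).neg).hasDerivWithinAt
        have maps : MapsTo (fun z : ℝ => -z) (Ioi 0) (Iio 0) :=
          fun z hz => mem_Iio.mpr (neg_lt_zero.mpr (mem_Ioi.mp hz))
        have h2 := HasDerivWithinAt.scomp y h1 hneg maps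
        simpa [hv, hv', Function.comp_def] using h2
      have hv2 : IntegrableOn (fun y => ‖v y‖^2) (Ioi 0) volume := by
        have h1 := integrableOn_comp_neg (f := fun x => ‖ψ x‖^2) (s := Iio 0)
          hQ.l2.integrableOn
        rw [neg_preimage_Iio] at h1
        exact h1
      have hv'2 : IntegrableOn (fun y => ‖v' y‖^2) (Ioi 0) volume := by
        have h1 := integrableOn_comp_neg (f := fun x => ‖ψ' x‖^2) (s := Iio 0)
          hQ.l2'.integrableOn
        rw [neg_preimage_Iio] at h1
        refine h1.congr_fun (fun y _ => ?_) measurableSet_Ioi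
        simp [hv']
      have hb := halfline_bound v v' hvd hv2 hv'2 ht (mem_Ioi.mpr (neg_pos.mpr hx))
      have he1 : (∫ y in Ioi (0:ℝ), ‖v y‖^2) = Pm := by
        rw [hPm]
        have := integral_comp_neg_Ioi (0:ℝ) (fun x => ‖ψ x‖^2)
        simpa [hv] using this
      have he2 : (∫ y in Ioi (0:ℝ), ‖v' y‖^2) = Dm := by
        rw [hDm]
        have := integral_comp_neg_Ioi (0:ℝ) (fun x => ‖ψ' x‖^2)
        have heq : (fun y => ‖v' y‖^2) = fun y => ‖ψ' (-y)‖^2 := by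
          funext y; simp [hv']
        rw [heq]
        simpa using this
      rw [he1, he2] at hb
      simpa [hv, neg_neg] using hb
    obtain ⟨A, hA⟩ := hQ.lim_pos
    obtain ⟨C, hC⟩ := hQ.lim_neg
    have hjump_eq : jumpC ψ = A - C := by
      rw [jumpC, hA.limUnder_eq, hC.limUnder_eq]
    have hAle : ∀ t : ℝ, 0 < t → ‖A‖^2 ≤ t * Pp + t⁻¹ * Dp := by
      intro t ht
      have h1 : Tendsto (fun x => ‖ψ x‖^2) (nhdsWithin 0 (Ioi 0)) (nhds (‖A‖^2)) :=
        (hA.norm).pow 2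
      refine le_of_tendsto h1 ?_
      filter_upwards [self_mem_nhdsWithin] with x hx
      exact claim_pos t ht x hx
    have hCle : ∀ t : ℝ, 0 < t → ‖C‖^2 ≤ t * Pm + t⁻¹ * Dm := by
      intro t ht
      have h1 : Tendsto (fun x => ‖ψ x‖^2) (nhdsWithin 0 (Iio 0)) (nhds (‖C‖^2)) :=
        (hC.norm).pow 2
      refine le_of_tendsto h1 ?_
      filter_upwards [self_mem_nhdsWithin] with x hx
      exact claim_neg t ht x hx
    have hJb : γ⁻¹ * J ≤ s*D + (4/(γ^2*s))*P := by
      set t : ℝ := 2/(γ*s) with htd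
      clear_value t
      have ht : 0 < t := by rw [htd]; positivity
      have h2 : ‖A - C‖^2 ≤ 2*‖A‖^2 + 2*‖C‖^2 := by
        have h3 := norm_sub_le A C
        have h4 : ‖A - C‖ * ‖A - C‖ ≤ (‖A‖ + ‖C‖) * (‖A‖ + ‖C‖) :=
          mul_le_mul h3 h3 (norm_nonneg _) (by positivity)
        nlinarith [sq_nonneg (‖A‖ - ‖C‖)]
      have h4 : J ≤ 2*(t*Pp + t⁻¹*Dp) + 2*(t*Pm + t⁻¹*Dm) := by
        rw [hJdef, hjump_eq]
        have hA2 := hAle t ht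
        have hC2 := hCle t ht
        linarith [h2]
      have h5 : γ⁻¹ * J ≤ γ⁻¹ * (2*(t*Pp + t⁻¹*Dp) + 2*(t*Pm + t⁻¹*Dm)) :=
        mul_le_mul_of_nonneg_left h4 (by positivity)
      have h6 : γ⁻¹ * (2*(t*Pp + t⁻¹*Dp) + 2*(t*Pm + t⁻¹*Dm))
          = (γ⁻¹*(2*t))*(Pm+Pp) + (γ⁻¹*(2*t⁻¹))*(Dm+Dp) := by ring
      have he1 : γ⁻¹*(2*t) = 4/(γ^2*s) := by
        rw [htd]; field_simp [hγ.ne', hs0.ne']; ring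
      have he2 : γ⁻¹*(2*t⁻¹) = s := by
        rw [htd, inv_div]; field_simp [hγ.ne']
      rw [h6] at h5
      rw [he1] at h5
      rw [he2] at h5
      rw [hPsplit] at h5
      rw [hDsplit] at h5
      linarith
    have hcoerc : δ*(P+D) ≤ D + ω*P - γ⁻¹*J := by
      have hδ1 : δ ≤ 1 - s := by rw [hδ]; exact min_le_left _ _
      have hδ2 : δ ≤ ω - 4/(γ^2*s) := by rw [hδ]; exact min_le_right _ _
      have hδD : δ*D ≤ (1-s)*D := mul_le_mul_of_nonneg_right hδ1 hD0
      have hδP : δ*P ≤ (ω-4/(γ^2*s))*P := mul_le_mul_of_nonneg_right hδ2 hP0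
      nlinarith [hJb]
    have hPpos : 0 < P := by
      rcases eq_or_lt_of_le hP0 with h0|h0
      · exfalso
        have hPeq : (∫ x, ‖ψ x‖^2) = 0 := by rw [← hP, ← h0]
        have h1 := (integral_eq_zero_iff_of_nonneg
          (fun x => sq_nonneg (‖ψ x‖)) hQ.l2).mp hPeq
        apply hneψ
        filter_upwards [h1] with x hx
        have hx2 : ‖ψ x‖^2 = 0 := hx
        have : ‖ψ x‖ = 0 := by
          nlinarith [norm_nonneg (ψ x)]
        simpa using this
      · exact h0
    have hNpos : 0 < P + D := by linarith
    have hlamB : lam * B = D + ω*P - γ⁻¹*J := by linarith [hI]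
    have haex : ∀ᵐ x : ℝ, x ≠ (0:ℝ) := by
      rw [ae_iff]
      have h0 : {x : ℝ | ¬ x ≠ 0} = {0} := by ext x; simp
      rw [h0]
      exact measure_singleton 0
    have hBub : B ≤ (P+D)^μ * P := by
      have hmono : (∫ x, ‖ψ x‖ ^ (2*μ+2)) ≤ ∫ x, (P+D)^μ * ‖ψ x‖^2 := by
        refine integral_mono_of_nonneg
          (Eventually.of_forall fun x => Real.rpow_nonneg (norm_nonneg _) _)
          (hQ.l2.const_mul _) ?_
        filter_upwards [haex] with x hx
        have hxb : ‖ψ x‖^2 ≤ P + D := by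
          rcases hx.lt_or_gt with h|h
          · have := claim_neg 1 one_pos x h
            simp only [one_mul, inv_one] at this
            linarith
          · have := claim_pos 1 one_pos x h
            simp only [one_mul, inv_one] at this
            linarith
        rcases eq_or_lt_of_le (norm_nonneg (ψ x)) with h0|h0
        · rw [← h0, Real.zero_rpow (by positivity : (2*μ+2:ℝ) ≠ 0)]
          positivity
        · have e1 : ‖ψ x‖ ^ (2*μ+2) = (‖ψ x‖^(2:ℕ))^μ * ‖ψ x‖^(2:ℕ) := by
            rw [Real.rpow_add h0, Real.rpow_mul (norm_nonneg _), Real.rpow_two]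
          rw [e1]
          exact mul_le_mul_of_nonneg_right
            (Real.rpow_le_rpow (sq_nonneg _) hxb hμ.le) (sq_nonneg _)
      calc B = ∫ x, ‖ψ x‖ ^ (2*μ+2) := hB
        _ ≤ ∫ x, (P+D)^μ * ‖ψ x‖^2 := hmono
        _ = (P+D)^μ * P := by rw [integral_const_mul, ← hP]
    have h1 : δ*(P+D) ≤ lam*B := by rw [hlamB]; exact hcoerc
    have hNlb : (δ/lam)^(1/μ) ≤ P + D := by
      have hNμ0 : (0:ℝ) ≤ (P+D)^μ := Real.rpow_nonneg hNpos.le _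
      have h2 : lam*B ≤ lam*((P+D)^μ*(P+D)) := by
        refine mul_le_mul_of_nonneg_left (hBub.trans ?_) hlam.le
        exact mul_le_mul_of_nonneg_left (by linarith) hNμ0
      have h3 : δ ≤ lam*(P+D)^μ := by
        have h4 : δ*(P+D) ≤ (lam*(P+D)^μ)*(P+D) := by nlinarith
        exact le_of_mul_le_mul_right h4 hNpos
      have h4 : δ/lam ≤ (P+D)^μ := (div_le_iff₀ hlam).mpr (by linarith)
      calc (δ/lam)^(1/μ) ≤ ((P+D)^μ)^(1/μ) :=
            Real.rpow_le_rpow (by positivity) h4 (by positivity)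
        _ = P + D := by
            rw [← Real.rpow_mul hNpos.le, mul_one_div, div_self hμ.ne', Real.rpow_one]
    have h2μ0 : (2*μ+2 : ℝ) ≠ 0 := by positivity
    have hSval : (1/2)*D + (ω/2)*P - (1/(2*γ))*J - lam/(2*μ+2)*B
        = lam*B*(μ/(2*μ+2)) := by
      have hγJ : (1:ℝ)/(2*γ) = (1/2)*γ⁻¹ := by
        rw [one_div, mul_inv]; norm_num
      rw [hγJ]
      have h5 : γ⁻¹*J = D + ω*P - lam*B := by linarith [hI]
      have h6 : (1/2)*γ⁻¹*J = (1/2)*(D + ω*P - lam*B) := by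
        rw [mul_assoc, h5]
      rw [h6]
      field_simp
      ring
    rw [hSval]
    have h6 : δ*(δ/lam)^(1/μ) ≤ lam*B :=
      le_trans (mul_le_mul_of_nonneg_left hNlb hδpos.le) h1
    have h7 : (0:ℝ) < μ/(2*μ+2) := by positivity
    calc cst = δ*(δ/lam)^(1/μ) * (μ/(2*μ+2)) := hcst
      _ ≤ lam*B*(μ/(2*μ+2)) := mul_le_mul_of_nonneg_right h6 h7.le
  obtain ⟨ψ₀, ψ₀', hQ₀, hne₀, hI₀⟩ := exists_elem γ ω lam μ hγ hω0 hlam hμ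
  have hne : Set.Nonempty {r : ℝ | ∃ ψ ψ' : ℝ → ℂ, MemQ ψ ψ' ∧ ¬ ψ =ᵐ[volume] 0 ∧
      Ifun γ ω lam μ ψ ψ' = 0 ∧ r = Sfun γ ω lam μ ψ ψ'} :=
    ⟨Sfun γ ω lam μ ψ₀ ψ₀', ψ₀, ψ₀', hQ₀, hne₀, hI₀, rfl⟩
  exact lt_of_lt_of_le hcstpos (le_csInf hne hbound)
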